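/- If a trajectory of x' = cos θ, y' = sin θ, θ' = u with (x(0), y(0), θ(0)) = (0,0,0) satisfies x(1)² + y(1)² = 1, then u ≡ 0 a.e. on [0,1] and the endpoint is (x(1), y(1), θ(1)) = (1, 0, 0). -/

import Mathlib

/-!
Write `(p, q)` for the endpoint `(x 1, y 1)`. Since `(cos θ, sin θ)` is a unit vector,
`∫₀¹ ‖(cos θ, sin θ) - (p, q)‖² = 2 - 2 (p² + q²) = 0`, so the continuous direction
`(cos θ, sin θ)` equals `(p, q)` on all of `[0, 1]`; at time `0` this forces `(p, q) = (1, 0)`.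
Thus `cos θ ≡ 1` on `[0, 1]`, so `θ` takes values in the discrete set `2πℤ` and, being continuous
with `θ 0 = 0`, vanishes there. Finally `θ` is the primitive of `u`, and by the Lebesgue
differentiation theorem a function whose primitive is constant on `[0, 1]` vanishes a.e. there.
-/

open MeasureTheory Set Filter Real Topology

lemma intervalIntegrable_of_abs_le {u : ℝ → ℝ} (hu : Measurable u) {C : ℝ}
    (hC : ∀ t, |u t| ≤ C) (a b : ℝ) : IntervalIntegrable u volume a b :=
  (intervalIntegrable_const (c := C)).mono_fun hu.aestronglyMeasurable.restrict
    (Eventually.of_forall fun t => by simpa using (hC t).trans (le_abs_self C))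

lemma eqOn_zero_of_integral_eq_zero {f : ℝ → ℝ} {a b : ℝ} (hab : a < b)
    (hf : ContinuousOn f (Icc a b)) (hf_nonneg : ∀ x ∈ Icc a b, 0 ≤ f x)
    (hf_int : ∫ x in a..b, f x = 0) : ∀ x ∈ Icc a b, f x = 0 := by
  by_contra! ⟨c, hc, hfc⟩
  have := intervalIntegral.integral_lt_integral_of_continuousOn_of_le_of_exists_lt hab
    continuousOn_const hf (fun x hx => hf_nonneg x (Ioc_subset_Icc_self hx))
    ⟨c, hc, (hf_nonneg c hc).lt_of_ne' hfc⟩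
  simp [hf_int] at this

lemma cos_sin_eq_of_integral_sq_add_sq_eq_one {θ : ℝ → ℝ} (hθ : Continuous θ)
    (hend : (∫ s in (0:ℝ)..1, cos (θ s)) ^ 2 + (∫ s in (0:ℝ)..1, sin (θ s)) ^ 2 = 1) :
    ∀ t ∈ Icc (0:ℝ) 1,
      cos (θ t) = ∫ s in (0:ℝ)..1, cos (θ s) ∧ sin (θ t) = ∫ s in (0:ℝ)..1, sin (θ s) := by
  set p := ∫ s in (0:ℝ)..1, cos (θ s)
  set q := ∫ s in (0:ℝ)..1, sin (θ s)
  have hcos : Continuous fun s => cos (θ s) := continuous_cos.comp hθ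
  have hsin : Continuous fun s => sin (θ s) := continuous_sin.comp hθ
  have hdist : ∫ s in (0:ℝ)..1, ((cos (θ s) - p) ^ 2 + (sin (θ s) - q) ^ 2) = 0 := by
    have hexpand : ∀ s, (cos (θ s) - p) ^ 2 + (sin (θ s) - q) ^ 2
        = (1 + p ^ 2 + q ^ 2) - (2 * p * cos (θ s) + 2 * q * sin (θ s)) := by
      intro s; nlinarith [sin_sq_add_cos_sq (θ s)]
    have hcos_int : IntervalIntegrable (fun s => 2 * p * cos (θ s)) volume 0 1 :=
      (hcos.const_mul _).intervalIntegrable 0 1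
    have hsin_int : IntervalIntegrable (fun s => 2 * q * sin (θ s)) volume 0 1 :=
      (hsin.const_mul _).intervalIntegrable 0 1
    simp only [hexpand]
    rw [intervalIntegral.integral_sub intervalIntegrable_const (hcos_int.add hsin_int),
      intervalIntegral.integral_add hcos_int hsin_int,
      intervalIntegral.integral_const_mul, intervalIntegral.integral_const_mul]
    simp only [intervalIntegral.integral_const, sub_zero, one_smul]
    linear_combination -hend
  intro t ht
  have hzero : (cos (θ t) - p) ^ 2 + (sin (θ t) - q) ^ 2 = 0 :=
    eqOn_zero_of_integral_eq_zero one_pos (by fun_prop) (fun _ _ => by positivity) hdist t ht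
  constructor <;> nlinarith [sq_nonneg (cos (θ t) - p), sq_nonneg (sin (θ t) - q)]

lemma IsPreconnected.eqOn_zero_of_cos_eq_one {α : Type*} [TopologicalSpace α] {S : Set α}
    (hS : IsPreconnected S) {f : α → ℝ} (hf : ContinuousOn f S)
    (hcos : ∀ t ∈ S, cos (f t) = 1) {t₀ : α} (ht₀ : t₀ ∈ S) (hf₀ : f t₀ = 0) :
    ∀ t ∈ S, f t = 0 := by
  have hmaps : MapsTo f S (AddSubgroup.zmultiples (2 * π)) := fun t ht => by
    obtain ⟨n, hn⟩ := (cos_eq_one_iff _).1 (hcos t ht)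
    exact AddSubgroup.mem_zmultiples_iff.2 ⟨n, by rw [zsmul_eq_mul, hn]⟩
  intro t ht
  rw [← hf₀]
  exact hS.constant_of_mapsTo (isDiscrete_iff_discreteTopology.2
    (inferInstanceAs (DiscreteTopology (AddSubgroup.zmultiples (2 * π))))) hf hmaps ht ht₀

lemma ae_eq_zero_of_integral_eqOn_zero {E : Type*} [NormedAddCommGroup E] [NormedSpace ℝ E]
    [CompleteSpace E] {f : ℝ → E} {a b : ℝ} (hf : IntervalIntegrable f volume a b)
    (hF : ∀ t ∈ Icc a b, ∫ s in a..t, f s = 0) :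
    ∀ᵐ t ∂volume.restrict (Icc a b), f t = 0 := by
  have ha : ∀ᵐ t ∂(volume : Measure ℝ), t ≠ a := by simp [ae_iff, measure_singleton]
  have hb : ∀ᵐ t ∂(volume : Measure ℝ), t ≠ b := by simp [ae_iff, measure_singleton]
  rw [ae_restrict_iff' measurableSet_Icc]
  filter_upwards [hf.ae_hasDerivAt_integral, ha, hb] with t hderiv hta htb ht
  have hIoo : Ioo a b ∈ 𝓝 t :=
    Ioo_mem_nhds (ht.1.lt_of_ne' hta) (ht.2.lt_of_ne htb)
  have hconst : (fun r => ∫ s in a..r, f s) =ᶠ[𝓝 t] fun _ => 0 := by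
    filter_upwards [hIoo] with r hr using hF r (Ioo_subset_Icc_self hr)
  have ha_mem : a ∈ uIcc a b := Icc_subset_uIcc (left_mem_Icc.2 (ht.1.trans ht.2))
  exact (hderiv (Icc_subset_uIcc ht) a ha_mem).unique
    ((hasDerivAt_const t 0).congr_of_eventuallyEq hconst)

theorem boundary_point_straight_line
    (x y θ u : ℝ → ℝ)
    (hu : Measurable u) (C : ℝ) (hC : ∀ t, |u t| ≤ C)
    (hθ : ∀ t, θ t = ∫ s in (0:ℝ)..t, u s)
    (hx : ∀ t, x t = ∫ s in (0:ℝ)..t, Real.cos (θ s))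
    (hy : ∀ t, y t = ∫ s in (0:ℝ)..t, Real.sin (θ s))
    (hend : (x 1) ^ 2 + (y 1) ^ 2 = 1) :
    (∀ᵐ t ∂(volume.restrict (Set.Icc (0:ℝ) 1)), u t = 0) ∧
      x 1 = 1 ∧ y 1 = 0 ∧ θ 1 = 0 := by
  have huInt := intervalIntegrable_of_abs_le hu hC
  have hθc : Continuous θ := by
    rw [funext hθ]; exact intervalIntegral.continuous_primitive huInt 0
  have hθ₀ : θ 0 = 0 := by rw [hθ, intervalIntegral.integral_same]
  rw [hx, hy] at hend ⊢
  have hdir := cos_sin_eq_of_integral_sq_add_sq_eq_one hθc hend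
  obtain ⟨hx₁, hy₁⟩ := hdir 0 (left_mem_Icc.2 zero_le_one)
  rw [hθ₀, cos_zero] at hx₁
  rw [hθ₀, sin_zero] at hy₁
  have hθ_zero : ∀ t ∈ Icc (0:ℝ) 1, θ t = 0 :=
    isPreconnected_Icc.eqOn_zero_of_cos_eq_one hθc.continuousOn
      (fun t ht => (hdir t ht).1.trans hx₁.symm) (left_mem_Icc.2 zero_le_one) hθ₀
  refine ⟨ae_eq_zero_of_integral_eqOn_zero (huInt 0 1) fun t ht => ?_, hx₁.symm, hy₁.symm,
    hθ_zero 1 (right_mem_Icc.2 zero_le_one)⟩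
  rw [← hθ]; exact hθ_zero t ht
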